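/- For every natural number n and all integers t and m, 220·∑_{j=1}^n G_{j+t−1}·G_{j+t}·G_{j+t+1}·G_{j+t+2}·G_{j+t+m} = (F_{m+2} + F_{m−3})·(−(G_{n+t+3}^5 − G_{t+3}^5) + 7·(G_{n+t+2}^5 − G_{t+2}^5) + 47·(G_{n+t+1}^5 − G_{t+1}^5)) + (F_{m+2} + F_{m−3})·(31·(G_{n+t}^5 − G_t^5) − 9·(G_{n+t−1}^5 − G_{t−1}^5) − (G_{n+t−2}^5 − G_{t−2}^5)) − 44·λ²·(F_{m+2} + F_{m−3})·(G_{n+t+2} − G_{t+2}) − 44·F_{m+2}·(G_{t+1}^5 − λ²·G_{t+1}) + 44·F_{m+2}·(G_{n+t+1}^5 − λ²·G_{n+t+1}). -/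

import Mathlib

/-!
The right-hand side is `Φ (n + t) - Φ t` for an explicit `Φ`, and `220` times the summand at `s`
is `Φ s - Φ (s - 1)`, so the sum telescopes. That difference identity is a polynomial identity in
two consecutive values of `G` and of `F`: every shifted value `G (s + i)` is an integer combination
of two consecutive ones, the addition formula `G (s + m) = F m * G (s + 1) + F (m - 1) * G s`
removes `m` from the indices, and Cassini's identity `λ = ± (G (s + 1) ^ 2 - G s * G (s + 2))`
turns `λ²` into a polynomial in the same values.
-/

open Finset

theorem Finset.sum_Icc_sub_telescope {M : Type*} [AddCommGroup M] (f : ℤ → M) (t : ℤ) (n : ℕ) :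
    ∑ j ∈ Icc 1 n, (f (j + t) - f (j + t - 1)) = f (n + t) - f t := by
  induction n with
  | zero => simp
  | succ n ih =>
    rw [sum_Icc_succ_top (by omega), ih, Nat.cast_succ, show (n : ℤ) + 1 + t - 1 = n + t by ring]
    abel

def IsGibonacci {R : Type*} [Add R] (G : ℤ → R) : Prop :=
  ∀ k, G (k + 2) = G (k + 1) + G k

namespace IsGibonacci

section AddGroup

variable {R : Type*} [AddGroup R] {A B : ℤ → R}

theorem eq_add (hA : IsGibonacci A) {a b c : ℤ} (hb : a + 1 = b) (hc : a + 2 = c) :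
    A c = A b + A a := by
  subst hb hc
  exact hA a

theorem comp_add_left (hA : IsGibonacci A) (c : ℤ) : IsGibonacci fun k ↦ A (c + k) :=
  fun k ↦ hA.eq_add (by ring) (by ring)

theorem ext (hA : IsGibonacci A) (hB : IsGibonacci B) (h0 : A 0 = B 0) (h1 : A 1 = B 1) :
    A = B := by
  have two_consecutive (k : ℤ) : A k = B k ∧ A (k + 1) = B (k + 1) := by
    induction k using Int.induction_on with
    | zero => exact ⟨h0, h1⟩
    | succ i ih => exact ⟨ih.2, by rw [hA.eq_add rfl (by ring), hB.eq_add rfl (by ring), ih.1, ih.2]⟩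
    | pred i ih =>
      have hA' : A (-i + 1) = A (-i) + A (-i - 1) := hA.eq_add (by ring) (by ring)
      have hB' : B (-i + 1) = B (-i) + B (-i - 1) := hB.eq_add (by ring) (by ring)
      rw [ih.1, ih.2, hB'] at hA'
      exact ⟨(add_left_cancel hA').symm, by rw [sub_add_cancel, ih.1]⟩
  exact funext fun k ↦ (two_consecutive k).1

end AddGroup

variable {R : Type*} [CommRing R] {F G : ℤ → R}

theorem add_eq_fib_mul_add (hG : IsGibonacci G) (hF : IsGibonacci F) (hF0 : F 0 = 0)
    (hF1 : F 1 = 1) (c k : ℤ) : G (c + k) = F k * G (c + 1) + F (k - 1) * G c := by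
  have hFneg : F (-1) = 1 := by
    have h : F 1 = F 0 + F (-1) := hF.eq_add (by norm_num) (by norm_num)
    rw [hF0, hF1, zero_add] at h
    exact h.symm
  have hcomb : IsGibonacci fun k ↦ F k * G (c + 1) + F (k - 1) * G c := fun k ↦ by
    have hF' : F (k + 2 - 1) = F (k + 1 - 1) + F (k - 1) := hF.eq_add (by ring) (by ring)
    simp only [hF k, hF']
    ring
  refine congrFun (ext (hG.comp_add_left c) hcomb ?_ ?_) k <;> simp [hF0, hF1, hFneg]

def cassini (G : ℤ → R) (k : ℤ) : R :=
  G (k + 1) ^ 2 - G k * G (k + 2)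

theorem cassini_zero (G : ℤ → R) : cassini G 0 = G 1 ^ 2 - G 0 * G 2 := by
  simp [cassini]

theorem cassini_add_one (hG : IsGibonacci G) (k : ℤ) : cassini G (k + 1) = -cassini G k := by
  have h3 : G (k + 1 + 2) = G (k + 2) + G (k + 1) := hG.eq_add (by ring) rfl
  simp only [cassini, h3, show k + 1 + 1 = k + 2 by ring, hG k]
  ring

theorem sq_cassini (hG : IsGibonacci G) (k : ℤ) : cassini G k ^ 2 = cassini G 0 ^ 2 := by
  induction k using Int.induction_on with
  | zero => rfl
  | succ i ih => rw [hG.cassini_add_one, neg_sq, ih]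
  | pred i ih => rw [← ih, ← neg_sq, ← hG.cassini_add_one, sub_add_cancel]

def fiveProductPrimitive (F G : ℤ → R) (m s : ℤ) : R :=
  (F (m + 2) + F (m - 3)) *
      (-G (s + 3) ^ 5 + 7 * G (s + 2) ^ 5 + 47 * G (s + 1) ^ 5 + 31 * G s ^ 5 - 9 * G (s - 1) ^ 5 -
        G (s - 2) ^ 5 - 44 * cassini G 0 ^ 2 * G (s + 2)) +
    44 * F (m + 2) * (G (s + 1) ^ 5 - cassini G 0 ^ 2 * G (s + 1))

theorem fiveProductPrimitive_sub (hG : IsGibonacci G) (hF : IsGibonacci F) (hF0 : F 0 = 0)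
    (hF1 : F 1 = 1) (m s : ℤ) :
    fiveProductPrimitive F G m s - fiveProductPrimitive F G m (s - 1) =
      220 * (G (s - 1) * G s * G (s + 1) * G (s + 2) * G (s + m)) := by
  have hcas : cassini G 0 ^ 2 = (G (s + 1) ^ 2 - G s * G (s + 2)) ^ 2 := (hG.sq_cassini s).symm
  simp only [fiveProductPrimitive, hcas, show s - 1 + 3 = s + 2 by ring,
    show s - 1 + 2 = s + 1 by ring, show s - 1 + 1 = s by ring, show s - 1 - 1 = s - 2 by ring,
    show s - 1 - 2 = s - 3 by ring]
  have f2 : F (m + 2) = F (m + 1) + F m := hF.eq_add (by ring) rfl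
  have f1 : F (m + 1) = F m + F (m - 1) := hF.eq_add (by ring) (by ring)
  have f0 : F m = F (m - 1) + F (m - 2) := hF.eq_add (by ring) (by ring)
  have fm1 : F (m - 1) = F (m - 2) + F (m - 3) := hF.eq_add (by ring) (by ring)
  have g3 : G (s + 3) = G (s + 2) + G (s + 1) := hG.eq_add (by ring) (by ring)
  have g2 : G (s + 2) = G (s + 1) + G s := hG s
  have g1 : G (s + 1) = G s + G (s - 1) := hG.eq_add (by ring) (by ring)
  have g0 : G s = G (s - 1) + G (s - 2) := hG.eq_add (by ring) (by ring)
  have gm1 : G (s - 1) = G (s - 2) + G (s - 3) := hG.eq_add (by ring) (by ring)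
  -- express everything through `F (m - 3)`, `F (m - 2)`, `G (s - 3)`, `G (s - 2)`
  rw [hG.add_eq_fib_mul_add hF hF0 hF1 s m, f2, f1, f0, fm1, g3, g2, g1, g0, gm1]
  ring

end IsGibonacci

theorem sum_products_five (F : ℤ → ℤ) (hF0 : F 0 = 0) (hF1 : F 1 = 1)
    (hF : ∀ k : ℤ, F (k + 2) = F (k + 1) + F k)
    (G : ℤ → ℤ) (hG : ∀ k : ℤ, G (k + 2) = G (k + 1) + G k) (n : ℕ) (t m : ℤ) :
    220 * ∑ j ∈ Finset.Icc 1 n,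
        G ((j : ℤ) + t - 1) * G ((j : ℤ) + t) * G ((j : ℤ) + t + 1) * G ((j : ℤ) + t + 2) *
          G ((j : ℤ) + t + m) =
      (F (m + 2) + F (m - 3)) *
          (-(G ((n : ℤ) + t + 3) ^ 5 - G (t + 3) ^ 5) +
            7 * (G ((n : ℤ) + t + 2) ^ 5 - G (t + 2) ^ 5) +
            47 * (G ((n : ℤ) + t + 1) ^ 5 - G (t + 1) ^ 5)) +
        (F (m + 2) + F (m - 3)) *
          (31 * (G ((n : ℤ) + t) ^ 5 - G t ^ 5) -
            9 * (G ((n : ℤ) + t - 1) ^ 5 - G (t - 1) ^ 5) -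
            (G ((n : ℤ) + t - 2) ^ 5 - G (t - 2) ^ 5)) -
        44 * (G 1 ^ 2 - G 0 * G 2) ^ 2 * (F (m + 2) + F (m - 3)) *
          (G ((n : ℤ) + t + 2) - G (t + 2)) -
        44 * F (m + 2) * (G (t + 1) ^ 5 - (G 1 ^ 2 - G 0 * G 2) ^ 2 * G (t + 1)) +
        44 * F (m + 2) * (G ((n : ℤ) + t + 1) ^ 5 - (G 1 ^ 2 - G 0 * G 2) ^ 2 * G ((n : ℤ) + t + 1)) := by
  rw [mul_sum, sum_congr rfl fun j _ ↦ (IsGibonacci.fiveProductPrimitive_sub hG hF hF0 hF1 m _).symm,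
    sum_Icc_sub_telescope]
  simp only [IsGibonacci.fiveProductPrimitive, IsGibonacci.cassini_zero]
  ring
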